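/- Let Assumptions 1 and 2 hold. Let K > 0 with γ > 4K/(κ δ^{β−1}) and m0 ∈ B(x*, K/2). For t ≥ 0 with γ_t ≥ γ/2 and for z in the closed ball B̄(x*, K), let p_t(z) denote the unique global minimizer over ℝ^d of y ↦ f(y) + ‖y − z‖²/(2γ_t). Then for every x ∈ B(x*, K/2) and every t ≥ 0 with γ_t ≥ γ/2: ‖p_t(x) − p_t(m_t(x))‖ ≤ ‖m0 − x*‖ e^{−t}. -/

import Mathlib

open MeasureTheory Real Set

-- Clipping operator `clip_R`.
open Classical in
noncomputable def clipR {d : ℕ} (R : ℝ) (x : EuclideanSpace ℝ (Fin d)) : EuclideanSpace ℝ (Fin d) :=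
  if x = 0 then 0 else (min R ‖x‖ / ‖x‖) • x

/-- Consensus point `θ_α(ρ)` of a measure `ρ`. -/
noncomputable def thetaAlpha {d : ℕ} (α : ℝ) (f : EuclideanSpace ℝ (Fin d) → ℝ)
    (ρ : Measure (EuclideanSpace ℝ (Fin d))) : EuclideanSpace ℝ (Fin d) :=
  (∫ y, Real.exp (-α * f y) ∂ρ)⁻¹ • ∫ y, Real.exp (-α * f y) • y ∂ρ

/-- Gaussian measure on `ℝ^d` with mean `m` and covariance `σ2 • I_d`. -/
noncomputable def gaussianE (d : ℕ) (m : EuclideanSpace ℝ (Fin d)) (σ2 : ℝ) :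
    Measure (EuclideanSpace ℝ (Fin d)) :=
  volume.withDensity fun y =>
    ENNReal.ofReal ((2 * Real.pi * σ2) ^ (-(d : ℝ) / 2) * Real.exp (-‖y - m‖ ^ 2 / (2 * σ2)))

open Filter Topology RealInnerProductSpace

/-!
Both proximal centres `x` and `m_t(x)` lie in `B̄(x*, K)`. Comparing the proximal objective at its
minimiser with its value at `x*`, the growth condition and the choice of `γ` force every such
proximal point into `B(x*, δ)`, where `f` is convex. There `y ↦ f y + ‖y - z‖² / (2g)` is
`1/g`-strongly convex, so adding the two strong-convexity inequalities at the two minimisers gives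
firm nonexpansiveness `‖p₁ - p₂‖² ≤ ⟪p₁ - p₂, z₁ - z₂⟫`, hence
`‖p_t(x) - p_t(m_t(x))‖ ≤ ‖m_t(x) - x‖ = e^{-t} ‖m0 - x*‖`.
-/

lemma StrongConvexOn.add_sq_le_of_isMinOn {E : Type*} [NormedAddCommGroup E] [NormedSpace ℝ E]
    {s : Set E} {m : ℝ} {f : E → ℝ} {p y : E} (hf : StrongConvexOn s m f)
    (hmin : IsMinOn f s p) (hp : p ∈ s) (hy : y ∈ s) :
    f p + m / 2 * ‖y - p‖ ^ 2 ≤ f y := by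
  set c := m / 2 * ‖y - p‖ ^ 2 with hc
  have hshrink : ∀ t ∈ Ioo (0 : ℝ) 1, (1 - t) * c ≤ f y - f p := by
    rintro t ⟨ht0, ht1⟩
    have hconv := hf.2 hy hp ht0.le (sub_nonneg.2 ht1.le) (add_sub_cancel t 1)
    have hle := isMinOn_iff.1 hmin _ (hf.1 hy hp ht0.le (sub_nonneg.2 ht1.le) (add_sub_cancel t 1))
    simp only [smul_eq_mul, ← hc] at hconv
    have : t * ((1 - t) * c) ≤ t * (f y - f p) := by linarith
    exact le_of_mul_le_mul_left this ht0
  have hlim : Tendsto (fun t : ℝ => (1 - t) * c) (𝓝[>] 0) (𝓝 c) := by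
    have := ((continuous_const.sub continuous_id).mul continuous_const).tendsto (0 : ℝ)
      (f := fun t : ℝ => (1 - t) * c)
    simpa using this.mono_left nhdsWithin_le_nhds
  have := le_of_tendsto hlim (eventually_of_mem (Ioo_mem_nhdsGT one_pos) hshrink)
  linarith

lemma ConvexOn.strongConvexOn_add_sq_norm_sub_div {E : Type*} [NormedAddCommGroup E]
    [InnerProductSpace ℝ E] {s : Set E} {f : E → ℝ} (hf : ConvexOn ℝ s f) (z : E) (g : ℝ) :
    StrongConvexOn s g⁻¹ (fun y => f y + ‖y - z‖ ^ 2 / (2 * g)) := by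
  rw [strongConvexOn_iff_convex]
  have haffine : ConvexOn ℝ s (fun y => (‖z‖ ^ 2 - 2 * ⟪y, z⟫) / (2 * g)) := by
    refine ⟨hf.1, fun u _ v _ a b _ _ hab => le_of_eq ?_⟩
    simp only [smul_eq_mul, inner_add_left, real_inner_smul_left]
    rw [eq_sub_of_add_eq hab]
    ring
  have hsplit : (fun y => f y + ‖y - z‖ ^ 2 / (2 * g) - g⁻¹ / 2 * ‖y‖ ^ 2)
      = f + fun y => (‖z‖ ^ 2 - 2 * ⟪y, z⟫) / (2 * g) := by
    funext y
    simp only [Pi.add_apply, norm_sub_sq_real]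
    ring
  exact hsplit ▸ hf.add haffine

lemma IsMinOn.norm_sub_le_of_convexOn {E : Type*} [NormedAddCommGroup E] [InnerProductSpace ℝ E]
    {s : Set E} {f : E → ℝ} {g : ℝ} {z₁ z₂ p₁ p₂ : E} (hf : ConvexOn ℝ s f) (hg : 0 < g)
    (hp₁ : IsMinOn (fun y => f y + ‖y - z₁‖ ^ 2 / (2 * g)) s p₁)
    (hp₂ : IsMinOn (fun y => f y + ‖y - z₂‖ ^ 2 / (2 * g)) s p₂) (h₁ : p₁ ∈ s) (h₂ : p₂ ∈ s) :
    ‖p₁ - p₂‖ ≤ ‖z₁ - z₂‖ := by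
  have q₁ := (hf.strongConvexOn_add_sq_norm_sub_div z₁ g).add_sq_le_of_isMinOn hp₁ h₁ h₂
  have q₂ := (hf.strongConvexOn_add_sq_norm_sub_div z₂ g).add_sq_le_of_isMinOn hp₂ h₂ h₁
  have hpolar : ‖p₂ - z₁‖ ^ 2 - ‖p₁ - z₁‖ ^ 2 + ‖p₁ - z₂‖ ^ 2 - ‖p₂ - z₂‖ ^ 2
      = 2 * ⟪p₁ - p₂, z₁ - z₂⟫ := by
    simp only [norm_sub_sq_real, inner_sub_left, inner_sub_right]
    ring
  have hfirm : ‖p₁ - p₂‖ ^ 2 ≤ ⟪p₁ - p₂, z₁ - z₂⟫ := by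
    rw [norm_sub_rev p₂] at q₁
    have : g⁻¹ * ‖p₁ - p₂‖ ^ 2 ≤ g⁻¹ * ⟪p₁ - p₂, z₁ - z₂⟫ := by
      linear_combination q₁ + q₂ + hpolar / (2 * g)
    exact le_of_mul_le_mul_left this (inv_pos.2 hg)
  have := hfirm.trans (real_inner_le_norm _ _)
  nlinarith [norm_nonneg (p₁ - p₂), norm_nonneg (z₁ - z₂)]

lemma sq_norm_sub_sub_sq_norm_sub_le {E : Type*} [SeminormedAddCommGroup E] (x y z : E) :
    ‖x - z‖ ^ 2 - ‖y - z‖ ^ 2 ≤ 2 * ‖x - z‖ * ‖x - y‖ := by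
  have htri := norm_sub_le_norm_sub_add_norm_sub x y z
  rcases le_or_gt ‖x - z‖ ‖y - z‖ with hle | hlt
  · nlinarith [pow_le_pow_left₀ (norm_nonneg _) hle 2,
      mul_nonneg (norm_nonneg (x - z)) (norm_nonneg (x - y))]
  · nlinarith [norm_nonneg (y - z)]

lemma IsMinOn.norm_sub_lt_of_growth {E : Type*} [SeminormedAddCommGroup E] {f : E → ℝ}
    {x₀ z p : E} {κ β δ K γ g : ℝ} (hκ : 0 < κ) (hβ : 1 ≤ β) (hδ : 0 < δ)
    (hgrowth : ∀ x, f x₀ + κ / 2 * ‖x - x₀‖ ^ β ≤ f x)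
    (hγ : 4 * K / (κ * δ ^ (β - 1)) < γ) (hg : γ / 2 ≤ g) (hz : ‖z - x₀‖ ≤ K)
    (hp : IsMinOn (fun y => f y + ‖y - z‖ ^ 2 / (2 * g)) univ p) : ‖p - x₀‖ < δ := by
  set r := ‖p - x₀‖
  have hδβ : 0 < κ * δ ^ (β - 1) := mul_pos hκ (rpow_pos_of_pos hδ _)
  have hγ0 : 0 < γ := lt_of_le_of_lt (div_nonneg (by linarith [(norm_nonneg _).trans hz]) hδβ.le) hγ
  have hg0 : 0 < g := by linarith
  have hdecrease : κ / 2 * r ^ β ≤ (‖x₀ - z‖ ^ 2 - ‖p - z‖ ^ 2) / (2 * g) := by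
    have hpx₀ := isMinOn_iff.1 hp x₀ (mem_univ _)
    have hgrowth_p := hgrowth p
    rw [sub_div]
    linarith
  have hcompare : κ / 2 * r ^ β * g ≤ K * r := by
    have hsq := sq_norm_sub_sub_sq_norm_sub_le x₀ p z
    rw [norm_sub_rev x₀ p] at hsq
    have hzK : ‖x₀ - z‖ * r ≤ K * r :=
      mul_le_mul_of_nonneg_right (norm_sub_rev x₀ z ▸ hz) (norm_nonneg _)
    have := (le_div_iff₀ (by positivity)).1 hdecrease
    nlinarith
  by_contra! hr
  have hr0 : 0 < r := hδ.trans_le hr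
  have hpow : δ ^ (β - 1) * r ≤ r ^ β := by
    calc δ ^ (β - 1) * r ≤ r ^ (β - 1) * r := by gcongr
      _ = r ^ β := by rw [← rpow_add_one hr0.ne', sub_add_cancel]
  have : κ * δ ^ (β - 1) * g ≤ 2 * K := by
    refine le_of_mul_le_mul_right ?_ hr0
    nlinarith [mul_le_mul_of_nonneg_left hpow (by positivity : 0 ≤ κ / 2 * g)]
  have := (div_lt_iff₀ hδβ).1 hγ
  nlinarith

theorem stmt10_general {d : ℕ}
    (f : EuclideanSpace ℝ (Fin d) → ℝ) (xstar : EuclideanSpace ℝ (Fin d))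
    (κ β : ℝ)
    (hκ : 0 < κ) (hβ : 1 ≤ β)
    (hgrowth : ∀ x, f xstar + κ / 2 * ‖x - xstar‖ ^ β ≤ f x)
    (δ lam : ℝ) (hδ : 0 < δ) (hlam : 0 < lam)
    (hconv : ConvexOn ℝ (Metric.ball xstar δ) (fun y => f y - lam / 2 * ‖y‖ ^ 2))
    (γ K : ℝ) (hγ : 4 * K / (κ * δ ^ (β - 1)) < γ)
    (m0 : EuclideanSpace ℝ (Fin d)) (hm0 : m0 ∈ Metric.ball xstar (K / 2))
    (σ0sq : ℝ) (α : ℝ) :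
    ∀ x ∈ Metric.ball xstar (K / 2), ∀ t : ℝ, 0 ≤ t →
      γ / 2 ≤ α * σ0sq * Real.exp (-2 * t) + (1 - Real.exp (-2 * t)) * γ →
      ∀ p1 p2 : EuclideanSpace ℝ (Fin d),
        IsMinOn (fun y => f y
            + ‖y - x‖ ^ 2
              / (2 * (α * σ0sq * Real.exp (-2 * t) + (1 - Real.exp (-2 * t)) * γ)))
          Set.univ p1 →
        IsMinOn (fun y => f y
            + ‖y - (Real.exp (-t) • (m0 - xstar) + x)‖ ^ 2
              / (2 * (α * σ0sq * Real.exp (-2 * t) + (1 - Real.exp (-2 * t)) * γ)))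
          Set.univ p2 →
        ‖p1 - p2‖ ≤ ‖m0 - xstar‖ * Real.exp (-t) := by
  intro x hx t ht hg p1 p2 hp1 hp2
  have hx' : ‖x - xstar‖ < K / 2 := mem_ball_iff_norm.1 hx
  have hγ0 : 0 < γ := lt_of_le_of_lt (div_nonneg (by linarith [norm_nonneg (x - xstar)])
    (mul_pos hκ (rpow_pos_of_pos hδ _)).le) hγ
  have hshift : ‖exp (-t) • (m0 - xstar)‖ = ‖m0 - xstar‖ * exp (-t) := by
    rw [norm_smul, norm_of_nonneg (exp_pos _).le, mul_comm]
  have hz₂ : ‖exp (-t) • (m0 - xstar) + x - xstar‖ ≤ K := by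
    have hm0' : ‖m0 - xstar‖ < K / 2 := mem_ball_iff_norm.1 hm0
    have hexp : exp (-t) ≤ 1 := exp_le_one_iff.2 (by linarith)
    rw [add_sub_assoc]
    refine (norm_add_le _ _).trans ?_
    nlinarith [norm_nonneg (m0 - xstar)]
  have hfconv : ConvexOn ℝ (Metric.ball xstar δ) f :=
    strongConvexOn_zero.1 ((strongConvexOn_iff_convex.2 hconv).mono hlam.le)
  have hp1δ : p1 ∈ Metric.ball xstar δ := mem_ball_iff_norm.2 <|
    hp1.norm_sub_lt_of_growth hκ hβ hδ hgrowth hγ hg (by linarith [norm_nonneg (x - xstar)])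
  have hp2δ : p2 ∈ Metric.ball xstar δ := mem_ball_iff_norm.2 <|
    hp2.norm_sub_lt_of_growth hκ hβ hδ hgrowth hγ hg hz₂
  calc ‖p1 - p2‖ ≤ ‖x - (exp (-t) • (m0 - xstar) + x)‖ :=
        (hp1.on_subset (subset_univ _)).norm_sub_le_of_convexOn hfconv (by linarith)
          (hp2.on_subset (subset_univ _)) hp1δ hp2δ
    _ = ‖m0 - xstar‖ * exp (-t) := by rw [sub_add_cancel_right, norm_neg, hshift]

/-- Lemma 5: `‖p_t(x) − p_t(m_t(x))‖ ≤ ‖m0 − x*‖ e^{−t}`, where `p_t(z)`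
is the unique global minimizer of `y ↦ f(y) + ‖y − z‖²/(2γ_t)`. -/
theorem stmt10 {d : ℕ}
    (f : EuclideanSpace ℝ (Fin d) → ℝ) (xstar : EuclideanSpace ℝ (Fin d))
    (a L κ β : ℝ) (hf : ContDiff ℝ 1 f) (ha : 0 < a) (hL : 0 < L)
    (hgrad : ∀ x, ‖gradient f x‖ ≤ L * (1 + ‖x‖ ^ a))
    (hκ : 0 < κ) (hβ : 1 ≤ β)
    (hgrowth : ∀ x, f xstar + κ / 2 * ‖x - xstar‖ ^ β ≤ f x)
    (hmin : ∀ x, x ≠ xstar → f xstar < f x)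
    (hf3 : ContDiff ℝ 3 f) (δ lam : ℝ) (hδ : 0 < δ) (hlam : 0 < lam)
    (hconv : ConvexOn ℝ (Metric.ball xstar δ) (fun y => f y - lam / 2 * ‖y‖ ^ 2))
    (γ K : ℝ) (hK : 0 < K) (hγ : 4 * K / (κ * δ ^ (β - 1)) < γ)
    (m0 : EuclideanSpace ℝ (Fin d)) (hm0 : m0 ∈ Metric.ball xstar (K / 2))
    (σ0sq : ℝ) (hσ0 : 0 ≤ σ0sq) (α : ℝ) (hα : 0 < α) :
    ∀ x ∈ Metric.ball xstar (K / 2), ∀ t : ℝ, 0 ≤ t →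
      γ / 2 ≤ α * σ0sq * Real.exp (-2 * t) + (1 - Real.exp (-2 * t)) * γ →
      ∀ p1 p2 : EuclideanSpace ℝ (Fin d),
        IsMinOn (fun y => f y
            + ‖y - x‖ ^ 2
              / (2 * (α * σ0sq * Real.exp (-2 * t) + (1 - Real.exp (-2 * t)) * γ)))
          Set.univ p1 →
        IsMinOn (fun y => f y
            + ‖y - (Real.exp (-t) • (m0 - xstar) + x)‖ ^ 2
              / (2 * (α * σ0sq * Real.exp (-2 * t) + (1 - Real.exp (-2 * t)) * γ)))
          Set.univ p2 →
        ‖p1 - p2‖ ≤ ‖m0 - xstar‖ * Real.exp (-t) :=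
  stmt10_general f xstar κ β hκ hβ hgrowth δ lam hδ hlam hconv γ K hγ m0 hm0 σ0sq α
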